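/- Fix p1, p2 ∈ (1/2, 1). The function δ^a(α) = I(1/2 + (1−α)·(p1 − 1/2)) − I(1/2 + α·(p2 − 1/2)) is continuous on [0,1] with δ^a(0) = I(p1) > 0 and δ^a(1) = −I(p2) < 0; consequently there exists a unique α_T ∈ (0,1) with δ^a(α_T) = 0, with δ^a(α) > 0 for α < α_T and δ^a(α) < 0 for α > α_T. -/
import Mathlib


/-- Binary-symmetric information `I(p) = log 2 − h(p)`. -/
noncomputable def Ibs (p : ℝ) : ℝ := Real.log 2 - Real.binEntropy p

/-- Augmented information gap under the ICDA assumption `β = 1 − α`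
(operator `J`): `δ^a(α) = I(1/2 + (1−α)(p1 − 1/2)) − I(1/2 + α(p2 − 1/2))`. -/
noncomputable def deltaAug (p1 p2 α : ℝ) : ℝ :=
  Ibs (1/2 + (1 - α) * (p1 - 1/2)) - Ibs (1/2 + α * (p2 - 1/2))

lemma Ibs_strictMonoOn : StrictMonoOn Ibs (Set.Icc (2⁻¹ : ℝ) 1) := by
  intro x hx y hy hxy
  have := Real.binEntropy_strictAntiOn hx hy hxy
  simpa [Ibs] using sub_lt_sub_left this (Real.log 2)

lemma Ibs_half : Ibs (1/2) = 0 := by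
  unfold Ibs
  rw [show ((1:ℝ)/2) = 2⁻¹ by norm_num, Real.binEntropy_two_inv, sub_self]

/-- For `p1, p2 ∈ (1/2, 1)`, the augmented gap `δ^a` is continuous on `[0,1]`
with `δ^a(0) = I(p1) > 0` and `δ^a(1) = −I(p2) < 0`, so there is a unique
threshold `α_T ∈ (0,1)` where `δ^a` vanishes, with `δ^a > 0` below it and
`δ^a < 0` above it. -/
theorem deltaAug_threshold (p1 p2 : ℝ) (hp1 : p1 ∈ Set.Ioo (1/2 : ℝ) 1)
    (hp2 : p2 ∈ Set.Ioo (1/2 : ℝ) 1) :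
    ContinuousOn (fun α : ℝ => deltaAug p1 p2 α) (Set.Icc (0:ℝ) 1) ∧
    deltaAug p1 p2 0 = Ibs p1 ∧ 0 < Ibs p1 ∧
    deltaAug p1 p2 1 = -Ibs p2 ∧ 0 < Ibs p2 ∧
    ∃ αT ∈ Set.Ioo (0:ℝ) 1, deltaAug p1 p2 αT = 0 ∧
      (∀ α' ∈ Set.Ioo (0:ℝ) 1, deltaAug p1 p2 α' = 0 → α' = αT) ∧
      (∀ α ∈ Set.Ico (0:ℝ) αT, 0 < deltaAug p1 p2 α) ∧
      (∀ α ∈ Set.Ioc αT (1:ℝ), deltaAug p1 p2 α < 0) := by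
  obtain ⟨hp1l, hp1r⟩ := hp1
  obtain ⟨hp2l, hp2r⟩ := hp2
  set f : ℝ → ℝ := fun α => deltaAug p1 p2 α with hf
  have hmem1 : ∀ α ∈ Set.Icc (0:ℝ) 1,
      (1/2 + (1 - α) * (p1 - 1/2)) ∈ Set.Icc (2⁻¹ : ℝ) 1 := by
    rintro α ⟨h0, h1⟩
    constructor <;> nlinarith
  have hmem2 : ∀ α ∈ Set.Icc (0:ℝ) 1,
      (1/2 + α * (p2 - 1/2)) ∈ Set.Icc (2⁻¹ : ℝ) 1 := by
    rintro α ⟨h0, h1⟩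
    constructor <;> nlinarith
  have hanti : StrictAntiOn f (Set.Icc (0:ℝ) 1) := by
    intro a ha b hb hab
    have h1 : Ibs (1/2 + (1 - b) * (p1 - 1/2)) < Ibs (1/2 + (1 - a) * (p1 - 1/2)) :=
      Ibs_strictMonoOn (hmem1 b hb) (hmem1 a ha) (by nlinarith)
    have h2 : Ibs (1/2 + a * (p2 - 1/2)) < Ibs (1/2 + b * (p2 - 1/2)) :=
      Ibs_strictMonoOn (hmem2 a ha) (hmem2 b hb) (by nlinarith)
    simp only [hf, deltaAug]
    linarith
  have hcont : ContinuousOn f (Set.Icc (0:ℝ) 1) := by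
    apply Continuous.continuousOn
    simp only [hf]
    unfold deltaAug Ibs
    fun_prop
  have hf0 : f 0 = Ibs p1 := by
    simp only [hf, deltaAug]
    norm_num [Ibs_half]
  have hf1 : f 1 = -Ibs p2 := by
    simp only [hf, deltaAug]
    norm_num [Ibs_half]
  have hI1 : 0 < Ibs p1 := by
    have hne : p1 ≠ 2⁻¹ := by intro h; rw [h] at hp1l; norm_num at hp1l
    simpa [Ibs, sub_pos] using Real.binEntropy_lt_log_two.mpr hne
  have hI2 : 0 < Ibs p2 := by
    have hne : p2 ≠ 2⁻¹ := by intro h; rw [h] at hp2l; norm_num at hp2l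
    simpa [Ibs, sub_pos] using Real.binEntropy_lt_log_two.mpr hne
  refine ⟨hcont, hf0, hI1, hf1, hI2, ?_⟩
  have h0mem : (0:ℝ) ∈ Set.Ioo (f 1) (f 0) := by
    rw [hf0, hf1]; exact ⟨by linarith, hI1⟩
  obtain ⟨αT, hαT, hfαT⟩ := intermediate_value_Ioo' (by norm_num : (0:ℝ) ≤ 1) hcont h0mem
  have hαTIcc : αT ∈ Set.Icc (0:ℝ) 1 := Set.Ioo_subset_Icc_self hαT
  refine ⟨αT, hαT, hfαT, ?_, ?_, ?_⟩
  · intro α' hα' hfα'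
    exact hanti.injOn (Set.Ioo_subset_Icc_self hα') hαTIcc (hfα'.trans hfαT.symm)
  · rintro α ⟨h0, hlt⟩
    have : f αT < f α := hanti ⟨h0, le_of_lt (lt_of_lt_of_le hlt hαTIcc.2)⟩ hαTIcc hlt
    rw [hfαT] at this; exact this
  · rintro α ⟨hlt, h1⟩
    have : f α < f αT := hanti hαTIcc ⟨le_of_lt (lt_of_le_of_lt hαTIcc.1 hlt), h1⟩ hlt
    rw [hfαT] at this; exact this
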